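/- arXiv:2310.12701 — 6 statements merged into one kernel-verified Lean document; each statement's English description precedes it below -/
import Mathlib

section
/- In a declining temporal reachability game with total edge relation, the winning regions of Player 1 are monotone non-increasing in time: for every vertex u and every i ∈ ℕ, if Player 1 wins from position (u, i+1), then Player 1 wins from position (u, i). Equivalently, writing W_k = {u ∈ V : Player 1 wins from (u,k)}, we have W_{i+1} ⊆ W_i for all i ∈ ℕ. -/
/-!
A temporal graph: vertex set `V`, time-indexed edge relation `E t u v` (edge from `u` to `v`
available at time `t`).  `P1 v` means vertex `v` is controlled by Player 1.
The edge relation is assumed total, so all plays are infinite.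

`P1WinsReach E P1 F u k` : Player 1 wins the reachability game with target set `F`
from position `(u, k)`, i.e. she has a strategy (assigning to each position `(v,t)` with
`v ∈ V₁` an available successor) such that every play from `(u,k)` consistent with it
visits `F`.
-/
def P1WinsReach {V : Type*} (E : ℕ → V → V → Prop) (P1 : V → Prop) (F : Set V)
    (u : V) (k : ℕ) : Prop :=
  ∃ σ : V → ℕ → V,
    (∀ (v : V) (t : ℕ), k ≤ t → P1 v → E t v (σ v t)) ∧
    ∀ ρ : ℕ → V, ρ 0 = u →
      (∀ i, E (k + i) (ρ i) (ρ (i + 1))) →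
      (∀ i, P1 (ρ i) → ρ (i + 1) = σ (ρ i) (k + i)) →
      ∃ i, ρ i ∈ F

/-- In a declining temporal reachability game (edges out of Player-1 vertices are decreasing,
edges out of Player-2 vertices are increasing) with total edge relation, the winning regions
of Player 1 are monotone non-increasing in time: if Player 1 wins from `(u, i+1)` then she
wins from `(u, i)`, i.e. `W_{i+1} ⊆ W_i`. -/
theorem declining_winning_regions_monotone
    {V : Type*} (E : ℕ → V → V → Prop) (P1 : V → Prop) (F : Set V)
    (htotal : ∀ (v : V) (t : ℕ), ∃ w, E t v w)
    (hdec : ∀ (u v : V) (t : ℕ), P1 u → E (t + 1) u v → E t u v)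
    (hinc : ∀ (u v : V) (t : ℕ), ¬ P1 u → E t u v → E (t + 1) u v)
    (u : V) (i : ℕ)
    (h : P1WinsReach E P1 F u (i + 1)) :
    P1WinsReach E P1 F u i := by
  obtain ⟨σ, hσ, hwin⟩ := h
  refine ⟨fun v t => σ v (t + 1), fun v t ht hp => hdec _ _ _ hp (hσ v (t + 1) (by omega) hp),
    fun ρ h0 hedge hcons => ?_⟩
  apply hwin ρ h0
  · intro j
    by_cases hp : P1 (ρ j)
    · have := hσ (ρ j) (i + 1 + j) (by omega) hp
      have hc := hcons j hp
      rw [hc]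
      have : i + 1 + j = i + j + 1 := by omega
      rw [this] at *
      exact hσ (ρ j) (i + j + 1) (by omega) hp
    · have : i + 1 + j = i + j + 1 := by omega
      rw [this]
      exact hinc _ _ _ hp (hedge j)
  · intro j hp
    have := hcons j hp
    have he : i + 1 + j = i + j + 1 := by omega
    rw [he]
    exact this
end

section
/- In an improving temporal reachability game with total edge relation, the winning regions of Player 2 are monotone non-increasing in time: for every vertex u and every i ∈ ℕ, if Player 2 wins from position (u, i+1), then Player 2 wins from position (u, i). -/
/-!
A temporal graph: vertex set `V`, time-indexed edge relation `E t u v`.  `P1 v` means vertex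
`v` is controlled by Player 1 (so `¬ P1 v` means it is controlled by Player 2).  The edge
relation is assumed total, so all plays are infinite.

`P2WinsReach E P1 F u k` : Player 2 wins the reachability game with target set `F` from
position `(u, k)`, i.e. he has a strategy such that no play from `(u,k)` consistent with it
ever visits `F`.
-/
def P2WinsReach {V : Type*} (E : ℕ → V → V → Prop) (P1 : V → Prop) (F : Set V)
    (u : V) (k : ℕ) : Prop :=
  ∃ τ : V → ℕ → V,
    (∀ (v : V) (t : ℕ), k ≤ t → ¬ P1 v → E t v (τ v t)) ∧
    ∀ ρ : ℕ → V, ρ 0 = u →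
      (∀ i, E (k + i) (ρ i) (ρ (i + 1))) →
      (∀ i, ¬ P1 (ρ i) → ρ (i + 1) = τ (ρ i) (k + i)) →
      ∀ i, ρ i ∉ F

/-- In an improving temporal reachability game (edges out of Player-1 vertices are increasing,
edges out of Player-2 vertices are decreasing) with total edge relation, the winning regions
of Player 2 are monotone non-increasing in time: if Player 2 wins from `(u, i+1)` then he
wins from `(u, i)`. -/
theorem improving_player2_winning_regions_monotone
    {V : Type*} (E : ℕ → V → V → Prop) (P1 : V → Prop) (F : Set V)
    (htotal : ∀ (v : V) (t : ℕ), ∃ w, E t v w)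
    (hinc : ∀ (u v : V) (t : ℕ), P1 u → E t u v → E (t + 1) u v)
    (hdec : ∀ (u v : V) (t : ℕ), ¬ P1 u → E (t + 1) u v → E t u v)
    (u : V) (i : ℕ)
    (h : P2WinsReach E P1 F u (i + 1)) :
    P2WinsReach E P1 F u i := by
  obtain ⟨τ, hτ, hplay⟩ := h
  refine ⟨fun v t => τ v (t + 1), ?_, ?_⟩
  · intro v t ht hv
    exact hdec v _ t hv (hτ v (t + 1) (by omega) hv)
  · intro ρ hρ0 hedges hmoves j
    refine hplay ρ hρ0 ?_ ?_ j
    · intro n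
      by_cases hp : P1 (ρ n)
      · have := hedges n
        have := hinc (ρ n) (ρ (n + 1)) (i + n) hp this
        simpa [Nat.add_assoc, Nat.add_comm, Nat.add_left_comm] using this
      · have hm := hmoves n hp
        have := hτ (ρ n) (i + n + 1) (by omega) hp
        rw [hm]
        simpa [Nat.add_assoc, Nat.add_comm, Nat.add_left_comm] using this
    · intro n hp
      have := hmoves n hp
      simpa [Nat.add_assoc, Nat.add_comm, Nat.add_left_comm] using this
end

section
/- In a declining game on a temporal graph with total edge relation, strategies can be shifted one time step with the same induced play: let σ be a Player-1 strategy and τ a Player-2 strategy, and define the shifted strategies σ' by σ'(v,k) = σ(v,k+1) for v ∈ V₁ (well defined because for v ∈ V₁ any edge available at time k+1 is available at time k) and τ' by τ'(v,k+1) = τ(v,k) for v ∈ V₂ (well defined because for v ∈ V₂ any edge available at time k is available at time k+1). Then for every vertex u and every i ∈ ℕ, the play from (u,i) determined by (σ', τ) visits vertex v at time k if and only if the play from (u,i+1) determined by (σ, τ') visits vertex v at time k+1. -/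
/-!
A temporal graph: vertex set `V`, time-indexed edge relation `E t u v`.  `P1 v` means vertex
`v` is controlled by Player 1.  The edge relation is assumed total, so all plays are infinite.
A pair of strategies `σ` (for Player 1) and `τ` (for Player 2) together with a start
position `(u, k)` determine a unique play, `playFrom P1 σ τ u k : ℕ → V`, where
`playFrom P1 σ τ u k n` is the vertex visited at time `k + n`.
-/
open Classical in
noncomputable def playFrom {V : Type*} (P1 : V → Prop) (σ τ : V → ℕ → V)
    (u : V) (k : ℕ) : ℕ → V
  | 0 => u
  | n + 1 =>
    let v := playFrom P1 σ τ u k n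
    if P1 v then σ v (k + n) else τ v (k + n)

/-- In a declining game on a temporal graph with total edge relation, strategies can be
shifted one time step with the same induced play: given a Player-1 strategy `σ` and a
Player-2 strategy `τ`, the shifted strategies `σ'` with `σ'(v,k) = σ(v,k+1)` and `τ'` with
`τ'(v,k+1) = τ(v,k)` are well defined (they choose available edges, by the declining
assumptions), and for all `u`, `i`: the play from `(u,i)` determined by `(σ', τ)` visits
vertex `v` at time `k` iff the play from `(u,i+1)` determined by `(σ, τ')` visits `v` at
time `k+1`. -/
theorem declining_strategy_shift
    {V : Type*} (E : ℕ → V → V → Prop) (P1 : V → Prop)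
    (htotal : ∀ (v : V) (t : ℕ), ∃ w, E t v w)
    (hdec : ∀ (u v : V) (t : ℕ), P1 u → E (t + 1) u v → E t u v)
    (hinc : ∀ (u v : V) (t : ℕ), ¬ P1 u → E t u v → E (t + 1) u v)
    (σ τ : V → ℕ → V)
    (hσ : ∀ (v : V) (t : ℕ), P1 v → E t v (σ v t))
    (hτ : ∀ (v : V) (t : ℕ), ¬ P1 v → E t v (τ v t))
    (σ' τ' : V → ℕ → V)
    (hσ' : ∀ (v : V) (t : ℕ), σ' v t = σ v (t + 1))
    (hτ' : ∀ (v : V) (t : ℕ), τ' v (t + 1) = τ v t)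
    (u : V) (i : ℕ) :
    (∀ (v : V) (t : ℕ), P1 v → E t v (σ' v t)) ∧
    (∀ (v : V) (t : ℕ), ¬ P1 v → E (t + 1) v (τ' v (t + 1))) ∧
    (∀ (v : V) (k : ℕ),
      (∃ n, i + n = k ∧ playFrom P1 σ' τ u i n = v) ↔
      (∃ n, (i + 1) + n = k + 1 ∧ playFrom P1 σ τ' u (i + 1) n = v)) := by
  classical
  have key : ∀ n, playFrom P1 σ' τ u i n = playFrom P1 σ τ' u (i + 1) n := by
    intro n
    induction n with
    | zero => rfl
    | succ n ih =>
      show (if P1 (playFrom P1 σ' τ u i n) then σ' (playFrom P1 σ' τ u i n) (i + n)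
            else τ (playFrom P1 σ' τ u i n) (i + n)) =
           (if P1 (playFrom P1 σ τ' u (i + 1) n) then σ (playFrom P1 σ τ' u (i + 1) n) (i + 1 + n)
            else τ' (playFrom P1 σ τ' u (i + 1) n) (i + 1 + n))
      rw [ih]
      by_cases h : P1 (playFrom P1 σ τ' u (i + 1) n)
      · simp [h, hσ', show i + n + 1 = i + 1 + n by omega]
      · simp [h, show i + 1 + n = (i + n) + 1 by omega, hτ']
  refine ⟨fun v t hv => ?_, fun v t hv => ?_, fun v k => ?_⟩
  · rw [hσ']; exact hdec _ _ _ hv (hσ v (t + 1) hv)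
  · rw [hτ']; exact hinc _ _ _ hv (hτ v t hv)
  · constructor
    · rintro ⟨n, hn, hp⟩
      exact ⟨n, by omega, by rw [← key]; exact hp⟩
    · rintro ⟨n, hn, hp⟩
      exact ⟨n, by omega, by rw [key]; exact hp⟩
end

section
/- In a parity game on a K-periodic temporal graph with total edge relation (K ≥ 1 and, for all u, v, t, u →_t v iff u →_{t+K} v), the winning regions are K-periodic: for every vertex u and every time k, Player 1 wins the parity game from (u,k) if and only if Player 1 wins it from (u, k+K). -/
/-!
Parity games on temporal graphs.  Vertex set `V`, time-indexed edge relation `E t u v`,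
`P1 v` means `v` is controlled by Player 1, priority function `Ω : V → ℕ`.  The edge
relation is assumed total, so all plays are infinite.

`ParityWinsPlay Ω ρ` : Player 1 wins the play `ρ`, i.e. the maximum priority occurring
infinitely often along `ρ` exists and is even (`p` occurs infinitely often and every
larger priority occurs only finitely often).

`ParityP1Wins E P1 Ω u k` : Player 1 wins the parity game from position `(u,k)`: she has
a strategy (assigning to each position `(v,t)` with `v ∈ V₁` an available successor) such
that every play from `(u,k)` consistent with it is won by her.
-/
def ParityWinsPlay {V : Type*} (Ω : V → ℕ) (ρ : ℕ → V) : Prop :=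
  ∃ p : ℕ, Even p ∧ (∀ N, ∃ i, N ≤ i ∧ Ω (ρ i) = p) ∧
    ∀ q, p < q → ∃ N, ∀ i, N ≤ i → Ω (ρ i) ≠ q

def ParityP1Wins {V : Type*} (E : ℕ → V → V → Prop) (P1 : V → Prop) (Ω : V → ℕ)
    (u : V) (k : ℕ) : Prop :=
  ∃ σ : V → ℕ → V,
    (∀ (v : V) (t : ℕ), k ≤ t → P1 v → E t v (σ v t)) ∧
    ∀ ρ : ℕ → V, ρ 0 = u →
      (∀ i, E (k + i) (ρ i) (ρ (i + 1))) →
      (∀ i, P1 (ρ i) → ρ (i + 1) = σ (ρ i) (k + i)) →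
      ParityWinsPlay Ω ρ

/-- In a parity game on a `K`-periodic temporal graph with total edge relation (`K ≥ 1`
and `u →_t v ↔ u →_{t+K} v` for all `u, v, t`), the winning regions are `K`-periodic:
Player 1 wins the parity game from `(u,k)` iff she wins it from `(u, k+K)`. -/
theorem periodic_parity_winning_regions
    {V : Type*} (E : ℕ → V → V → Prop) (P1 : V → Prop) (Ω : V → ℕ)
    (htotal : ∀ (v : V) (t : ℕ), ∃ w, E t v w)
    (K : ℕ) (hK : 1 ≤ K)
    (hper : ∀ (u v : V) (t : ℕ), E t u v ↔ E (t + K) u v)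
    (u : V) (k : ℕ) :
    ParityP1Wins E P1 Ω u k ↔ ParityP1Wins E P1 Ω u (k + K) := by
  constructor
  · rintro ⟨σ, hσE, hσW⟩
    refine ⟨fun v t => σ v (t - K), ?_, ?_⟩
    · intro v t ht hv
      have h1 := hσE v (t - K) (by omega) hv
      have h2 := (hper v (σ v (t - K)) (t - K)).mp h1
      rwa [show t - K + K = t by omega] at h2
    · intro ρ h0 hE hC
      apply hσW ρ h0
      · intro i
        have h := hE i
        rw [show k + K + i = k + i + K by omega] at h
        exact (hper _ _ (k + i)).mpr h
      · intro i hv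
        have h := hC i hv
        simpa [show k + K + i - K = k + i by omega] using h
  · rintro ⟨σ, hσE, hσW⟩
    refine ⟨fun v t => σ v (t + K), ?_, ?_⟩
    · intro v t ht hv
      exact (hper v _ t).mpr (hσE v (t + K) (by omega) hv)
    · intro ρ h0 hE hC
      apply hσW ρ h0
      · intro i
        have h := (hper _ _ (k + i)).mp (hE i)
        rwa [show k + i + K = k + K + i by omega] at h
      · intro i hv
        have h := hC i hv
        simpa [show k + i + K = k + K + i by omega] using h
end

section
/- In a declining temporal parity game with total edge relation, the winning regions of Player 1 are monotone non-increasing in time: for every vertex u and every i ∈ ℕ, if Player 1 wins the parity game from position (u, i+1), then Player 1 wins it from position (u, i). -/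
/-- In a declining temporal parity game with total edge relation (edges out of Player-1
vertices are decreasing, edges out of Player-2 vertices are increasing), the winning
regions of Player 1 are monotone non-increasing in time: if Player 1 wins the parity game
from `(u, i+1)`, then she wins it from `(u, i)`. -/
theorem declining_parity_winning_regions_monotone
    {V : Type*} (E : ℕ → V → V → Prop) (P1 : V → Prop) (Ω : V → ℕ)
    (htotal : ∀ (v : V) (t : ℕ), ∃ w, E t v w)
    (hdec : ∀ (u v : V) (t : ℕ), P1 u → E (t + 1) u v → E t u v)
    (hinc : ∀ (u v : V) (t : ℕ), ¬ P1 u → E t u v → E (t + 1) u v)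
    (u : V) (i : ℕ)
    (h : ParityP1Wins E P1 Ω u (i + 1)) :
    ParityP1Wins E P1 Ω u i := by
  obtain ⟨σ, hσ, hwin⟩ := h
  refine ⟨fun v t => σ v (t + 1), fun v t ht hv => hdec _ _ _ hv (hσ v (t + 1) (by omega) hv),
    fun ρ h0 hE hC => ?_⟩
  refine hwin ρ h0 (fun j => ?_) (fun j hj => ?_)
  · by_cases hp : P1 (ρ j)
    · have := hC j hp
      rw [this]
      have : i + 1 + j = i + j + 1 := by omega
      rw [this]
      exact hσ _ _ (by omega) hp
    · have : i + 1 + j = i + j + 1 := by omega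
      rw [this]
      exact hinc _ _ _ hp (hE j)
  · have h1 := hC j hj
    have h2 : i + j + 1 = i + 1 + j := by omega
    simp only at h1
    rw [h1, h2]
end

section
/- In an improving temporal parity game with total edge relation, the winning regions of Player 2 are monotone non-increasing in time: for every vertex u and every i ∈ ℕ, if Player 2 wins the parity game from position (u, i+1), then Player 2 wins it from position (u, i). -/
def ParityP2Wins {V : Type*} (E : ℕ → V → V → Prop) (P1 : V → Prop) (Ω : V → ℕ)
    (u : V) (k : ℕ) : Prop :=
  ∃ τ : V → ℕ → V,
    (∀ (v : V) (t : ℕ), k ≤ t → ¬ P1 v → E t v (τ v t)) ∧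
    ∀ ρ : ℕ → V, ρ 0 = u →
      (∀ i, E (k + i) (ρ i) (ρ (i + 1))) →
      (∀ i, ¬ P1 (ρ i) → ρ (i + 1) = τ (ρ i) (k + i)) →
      ¬ ParityWinsPlay Ω ρ

/-- In an improving temporal parity game with total edge relation (edges out of Player-1
vertices are increasing, edges out of Player-2 vertices are decreasing), the winning
regions of Player 2 are monotone non-increasing in time: if Player 2 wins the parity game
from `(u, i+1)`, then he wins it from `(u, i)`. -/
theorem improving_parity_player2_winning_regions_monotone
    {V : Type*} (E : ℕ → V → V → Prop) (P1 : V → Prop) (Ω : V → ℕ)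
    (htotal : ∀ (v : V) (t : ℕ), ∃ w, E t v w)
    (hinc : ∀ (u v : V) (t : ℕ), P1 u → E t u v → E (t + 1) u v)
    (hdec : ∀ (u v : V) (t : ℕ), ¬ P1 u → E (t + 1) u v → E t u v)
    (u : V) (i : ℕ)
    (h : ParityP2Wins E P1 Ω u (i + 1)) :
    ParityP2Wins E P1 Ω u i := by
  obtain ⟨τ, hτ, hwin⟩ := h
  refine ⟨fun v t => τ v (t + 1), ?_, ?_⟩
  · intro v t ht hv
    exact hdec _ _ _ hv (hτ v (t + 1) (by omega) hv)
  · intro ρ h0 hedge hcons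
    refine hwin ρ h0 ?_ ?_
    · intro j
      by_cases hp : P1 (ρ j)
      · have := hinc _ _ _ hp (hedge j)
        simpa [Nat.add_assoc, Nat.add_comm, Nat.add_left_comm] using this
      · have hc := hcons j hp
        simp only [] at hc
        rw [hc, show i + j + 1 = i + 1 + j from by omega]
        exact hτ (ρ j) (i + 1 + j) (by omega) hp
    · intro j hp
      have hc := hcons j hp
      simp only [] at hc
      rw [hc, show i + j + 1 = i + 1 + j from by omega]
end
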